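/- arXiv:1507.01158 — 9 statements merged into one kernel-verified Lean document; each statement's English description precedes it below -/
import Mathlib

section
/- Let C be a (2,3)-sparse graph and let F_i and F_j be nonempty isostatic subgraphs of C. Then the union F_i ∪ F_j is underconstrained if and only if the intersection F_i ∩ F_j is trivial. -/
/-- A finite combinatorial graph: a finite vertex set and a finite set of edges,
each edge an unordered pair of distinct vertices whose endpoints lie in the vertex set. -/
structure CGraph (α : Type) [DecidableEq α] where
  verts : Finset α
  edges : Finset (Sym2 α)
  not_diag : ∀ e ∈ edges, ¬ e.IsDiag
  endpoints_mem : ∀ e ∈ edges, ∀ v ∈ e, v ∈ verts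

namespace CGraph

variable {α : Type} [DecidableEq α]

/-- Subgraph relation (componentwise containment). -/
def IsSubgraph (H G : CGraph α) : Prop :=
  H.verts ⊆ G.verts ∧ H.edges ⊆ G.edges

/-- Componentwise union of two graphs. -/
def union (G H : CGraph α) : CGraph α where
  verts := G.verts ∪ H.verts
  edges := G.edges ∪ H.edges
  not_diag := by
    intro e he
    rcases Finset.mem_union.1 he with h | h
    · exact G.not_diag e h
    · exact H.not_diag e h
  endpoints_mem := by
    intro e he v hv
    rcases Finset.mem_union.1 he with h | h
    · exact Finset.mem_union_left _ (G.endpoints_mem e h v hv)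
    · exact Finset.mem_union_right _ (H.endpoints_mem e h v hv)

/-- Componentwise intersection of two graphs. -/
def inter (G H : CGraph α) : CGraph α where
  verts := G.verts ∩ H.verts
  edges := G.edges ∩ H.edges
  not_diag := fun e he => G.not_diag e (Finset.mem_inter.1 he).1
  endpoints_mem := fun e he v hv => Finset.mem_inter.2
    ⟨G.endpoints_mem e (Finset.mem_inter.1 he).1 v hv,
     H.endpoints_mem e (Finset.mem_inter.1 he).2 v hv⟩

/-- The empty graph. -/
def empty : CGraph α := ⟨∅, ∅, by simp, by simp⟩

/-- Union of a list of graphs. -/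
def listUnion : List (CGraph α) → CGraph α
  | [] => empty
  | g :: gs => g.union (listUnion gs)

/-- A graph is trivial if it has at most one vertex. -/
def Trivial (G : CGraph α) : Prop := G.verts.card ≤ 1

/-- (2,3)-sparsity: every subgraph on at least 2 vertices has at most `2|V'| - 3` edges
(stated additively to avoid truncated subtraction). -/
def Sparse23 (G : CGraph α) : Prop :=
  ∀ H : CGraph α, H.IsSubgraph G → 2 ≤ H.verts.card →
    H.edges.card + 3 ≤ 2 * H.verts.card

/-- Isostatic (Laman-tight): (2,3)-sparse with `|E| = 2|V| - 3`. -/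
def Isostatic (G : CGraph α) : Prop :=
  G.Sparse23 ∧ G.edges.card + 3 = 2 * G.verts.card

/-- Underconstrained: (2,3)-sparse, at least two vertices, and `|E| < 2|V| - 3`. -/
def Underconstrained (G : CGraph α) : Prop :=
  G.Sparse23 ∧ 2 ≤ G.verts.card ∧ G.edges.card + 3 < 2 * G.verts.card

/-- A graph consisting of a single edge together with its two endpoints. -/
def IsSingleEdge (G : CGraph α) : Prop :=
  ∃ u v : α, u ≠ v ∧ G.verts = {u, v} ∧ G.edges = {s(u, v)}

/-- A cluster of `C`: a proper isostatic subgraph of `C` that is vertex-maximal among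
proper isostatic subgraphs of `C`. -/
def IsCluster (D C : CGraph α) : Prop :=
  D.IsSubgraph C ∧ D ≠ C ∧ D.Isostatic ∧
  ∀ D' : CGraph α, D'.IsSubgraph C → D' ≠ C → D'.Isostatic → ¬ D.verts ⊂ D'.verts

/-- Every pair of distinct clusters of `C` has trivial intersection. -/
def PairwiseTrivialClusters (C : CGraph α) : Prop :=
  ∀ D₁ D₂ : CGraph α, IsCluster D₁ C → IsCluster D₂ C → D₁ ≠ D₂ → (D₁.inter D₂).Trivial

end CGraph

/-- For nonempty isostatic subgraphs `Fi, Fj` of a (2,3)-sparse graph `C`,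
the union `Fi ∪ Fj` is underconstrained iff the intersection `Fi ∩ Fj` is trivial. -/
theorem union_underconstrained_iff_inter_trivial
    {α : Type} [DecidableEq α] (C Fi Fj : CGraph α)
    (hC : C.Sparse23)
    (hFiSub : Fi.IsSubgraph C) (hFjSub : Fj.IsSubgraph C)
    (hFiNe : Fi.verts.Nonempty) (hFjNe : Fj.verts.Nonempty)
    (hFiIso : Fi.Isostatic) (hFjIso : Fj.Isostatic) :
    (Fi.union Fj).Underconstrained ↔ (Fi.inter Fj).Trivial := by
  have hUnionSub : (Fi.union Fj).IsSubgraph C :=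
    ⟨Finset.union_subset hFiSub.1 hFjSub.1, Finset.union_subset hFiSub.2 hFjSub.2⟩
  have hInterSub : (Fi.inter Fj).IsSubgraph C :=
    ⟨Finset.inter_subset_left.trans hFiSub.1, Finset.inter_subset_left.trans hFiSub.2⟩
  have hUnionSparse : (Fi.union Fj).Sparse23 := fun H hH h2 =>
    hC H ⟨hH.1.trans hUnionSub.1, hH.2.trans hUnionSub.2⟩ h2
  have hVi : 2 ≤ Fi.verts.card := by
    have h1 : 1 ≤ Fi.verts.card := Finset.card_pos.2 hFiNe
    have := hFiIso.2
    omega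
  have hVU : 2 ≤ (Fi.union Fj).verts.card :=
    le_trans hVi (Finset.card_le_card Finset.subset_union_left)
  have hEcount : (Fi.union Fj).edges.card + (Fi.inter Fj).edges.card
      = Fi.edges.card + Fj.edges.card := Finset.card_union_add_card_inter _ _
  have hVcount : (Fi.union Fj).verts.card + (Fi.inter Fj).verts.card
      = Fi.verts.card + Fj.verts.card := Finset.card_union_add_card_inter _ _
  have hi := hFiIso.2
  have hj := hFjIso.2
  constructor
  · rintro ⟨-, -, hlt⟩
    by_contra htriv
    have h2 : 2 ≤ (Fi.inter Fj).verts.card := by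
      unfold CGraph.Trivial at htriv; omega
    have := hC _ hInterSub h2
    omega
  · intro htriv
    have hE0 : (Fi.inter Fj).edges = ∅ := by
      rw [Finset.eq_empty_iff_forall_notMem]
      intro e he
      induction e using Sym2.ind with
      | _ u v =>
        have hd := (Fi.inter Fj).not_diag _ he
        have hne : u ≠ v := by simpa using hd
        have hu : u ∈ (Fi.inter Fj).verts :=
          (Fi.inter Fj).endpoints_mem _ he u (Sym2.mem_mk_left u v)
        have hv : v ∈ (Fi.inter Fj).verts :=
          (Fi.inter Fj).endpoints_mem _ he v (Sym2.mem_mk_right u v)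
        have : 1 < (Fi.inter Fj).verts.card :=
          Finset.one_lt_card.2 ⟨u, hu, v, hv, hne⟩
        exact absurd htriv (by unfold CGraph.Trivial; omega)
    have hE0c : (Fi.inter Fj).edges.card = 0 := by rw [hE0]; simp
    refine ⟨hUnionSparse, hVU, ?_⟩
    unfold CGraph.Trivial at htriv
    omega
end

section
/- Let C be a (2,3)-sparse graph and let F_i and F_j be nonempty isostatic subgraphs of C. Then the union F_i ∪ F_j is isostatic if and only if the intersection F_i ∩ F_j is isostatic. -/
/-- For nonempty isostatic subgraphs `Fi, Fj` of a (2,3)-sparse graph `C`,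
the union `Fi ∪ Fj` is isostatic iff the intersection `Fi ∩ Fj` is isostatic. -/
theorem union_isostatic_iff_inter_isostatic
    {α : Type} [DecidableEq α] (C Fi Fj : CGraph α)
    (hC : C.Sparse23)
    (hFiSub : Fi.IsSubgraph C) (hFjSub : Fj.IsSubgraph C)
    (hFiNe : Fi.verts.Nonempty) (hFjNe : Fj.verts.Nonempty)
    (hFiIso : Fi.Isostatic) (hFjIso : Fj.Isostatic) :
    (Fi.union Fj).Isostatic ↔ (Fi.inter Fj).Isostatic := by
  have hUsub : (Fi.union Fj).IsSubgraph C :=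
    ⟨Finset.union_subset hFiSub.1 hFjSub.1, Finset.union_subset hFiSub.2 hFjSub.2⟩
  have hIsub : (Fi.inter Fj).IsSubgraph C :=
    ⟨(Finset.inter_subset_left).trans hFiSub.1, (Finset.inter_subset_left).trans hFiSub.2⟩
  have sparseU : (Fi.union Fj).Sparse23 := fun H hH h2 =>
    hC H ⟨hH.1.trans hUsub.1, hH.2.trans hUsub.2⟩ h2
  have sparseI : (Fi.inter Fj).Sparse23 := fun H hH h2 =>
    hC H ⟨hH.1.trans hIsub.1, hH.2.trans hIsub.2⟩ h2
  have hV : (Fi.union Fj).verts.card + (Fi.inter Fj).verts.card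
      = Fi.verts.card + Fj.verts.card := Finset.card_union_add_card_inter _ _
  have hE : (Fi.union Fj).edges.card + (Fi.inter Fj).edges.card
      = Fi.edges.card + Fj.edges.card := Finset.card_union_add_card_inter _ _
  have hi := hFiIso.2
  have hj := hFjIso.2
  constructor
  · intro hU
    have := hU.2
    exact ⟨sparseI, by omega⟩
  · intro hI
    have := hI.2
    exact ⟨sparseU, by omega⟩
end

section
/- Let C be a (2,3)-sparse graph and let F_i and F_j be nonempty isostatic subgraphs of C. Then the intersection F_i ∩ F_j is not underconstrained; that is, F_i ∩ F_j is either trivial or isostatic. -/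
/-- For nonempty isostatic subgraphs `Fi, Fj` of a (2,3)-sparse graph `C`,
the intersection `Fi ∩ Fj` is not underconstrained; it is either trivial or isostatic. -/
theorem inter_not_underconstrained
    {α : Type} [DecidableEq α] (C Fi Fj : CGraph α)
    (hC : C.Sparse23)
    (hFiSub : Fi.IsSubgraph C) (hFjSub : Fj.IsSubgraph C)
    (hFiNe : Fi.verts.Nonempty) (hFjNe : Fj.verts.Nonempty)
    (hFiIso : Fi.Isostatic) (hFjIso : Fj.Isostatic) :
    ¬ (Fi.inter Fj).Underconstrained ∧
      ((Fi.inter Fj).Trivial ∨ (Fi.inter Fj).Isostatic) := by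
  classical
  -- intersection is a subgraph of C
  have hInterSub : (Fi.inter Fj).IsSubgraph C := by
    constructor
    · exact fun v hv => hFiSub.1 (Finset.mem_inter.1 hv).1
    · exact fun e he => hFiSub.2 (Finset.mem_inter.1 he).1
  have hUnionSub : (Fi.union Fj).IsSubgraph C := by
    constructor
    · intro v hv
      rcases Finset.mem_union.1 hv with h | h
      · exact hFiSub.1 h
      · exact hFjSub.1 h
    · intro e he
      rcases Finset.mem_union.1 he with h | h
      · exact hFiSub.2 h
      · exact hFjSub.2 h
  have hInterSparse : (Fi.inter Fj).Sparse23 := by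
    intro H hH h2
    exact hC H ⟨hH.1.trans hInterSub.1, hH.2.trans hInterSub.2⟩ h2
  by_cases htriv : (Fi.inter Fj).Trivial
  · refine ⟨fun hU => ?_, Or.inl htriv⟩
    simp only [CGraph.Trivial] at htriv
    exact absurd hU.2.1 (by omega)
  · -- intersection has ≥ 2 vertices
    have h2 : 2 ≤ (Fi.inter Fj).verts.card := by
      unfold CGraph.Trivial at htriv; omega
    -- union has ≥ 2 vertices
    have h2u : 2 ≤ (Fi.union Fj).verts.card := by
      have : (Fi.inter Fj).verts ⊆ (Fi.union Fj).verts := by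
        intro v hv
        exact Finset.mem_union.2 (Or.inl (Finset.mem_inter.1 hv).1)
      have := Finset.card_le_card this
      omega
    have hUnionBd := hC (Fi.union Fj) hUnionSub h2u
    have hv' : (Fi.inter Fj).verts = Fi.verts ∩ Fj.verts := rfl
    have he' : (Fi.inter Fj).edges = Fi.edges ∩ Fj.edges := rfl
    have hv'' : (Fi.union Fj).verts = Fi.verts ∪ Fj.verts := rfl
    have he'' : (Fi.union Fj).edges = Fi.edges ∪ Fj.edges := rfl
    have hvc := Finset.card_union_add_card_inter Fi.verts Fj.verts
    have hec := Finset.card_union_add_card_inter Fi.edges Fj.edges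
    have hFiE := hFiIso.2
    have hFjE := hFjIso.2
    have hInterBd := hInterSparse (Fi.inter Fj) ⟨le_refl _, le_refl _⟩ h2
    rw [hv'', he''] at hUnionBd
    rw [hv', he'] at hInterBd
    rw [hv'] at h2
    have hEq : (Fi.inter Fj).edges.card + 3 = 2 * (Fi.inter Fj).verts.card := by
      rw [hv', he']
      omega
    exact ⟨fun hU => by
      have h1 := hU.2.1
      have h2' := hU.2.2
      rw [hv'] at h1
      rw [hv', he'] at h2'
      omega, Or.inr ⟨hInterSparse, hEq⟩⟩
end

section
/- Let C be an isostatic graph and let C_i and C_j be two distinct clusters of C. Then C_i ∪ C_j is isostatic if and only if C_i ∪ C_j = C. -/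
lemma CGraph.ext' {α : Type} [DecidableEq α] {G H : CGraph α}
    (hv : G.verts = H.verts) (he : G.edges = H.edges) : G = H := by
  cases G; cases H; simp_all

/-- For distinct clusters `Ci, Cj` of an isostatic graph `C`,
`Ci ∪ Cj` is isostatic iff `Ci ∪ Cj = C`. -/
theorem cluster_union_isostatic_iff_eq
    {α : Type} [DecidableEq α] (C Ci Cj : CGraph α)
    (hC : C.Isostatic)
    (hi : CGraph.IsCluster Ci C) (hj : CGraph.IsCluster Cj C) (hij : Ci ≠ Cj) :
    (Ci.union Cj).Isostatic ↔ Ci.union Cj = C := by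
  constructor
  · intro hIso
    by_contra hne
    have hsub : (Ci.union Cj).IsSubgraph C :=
      ⟨Finset.union_subset hi.1.1 hj.1.1, Finset.union_subset hi.1.2 hj.1.2⟩
    have h1 := hi.2.2.2 _ hsub hne hIso
    have h2 := hj.2.2.2 _ hsub hne hIso
    have hvi : Ci.verts = (Ci.union Cj).verts := by
      by_contra h
      exact h1 ((Finset.subset_union_left).ssubset_of_ne h)
    have hvj : Cj.verts = (Ci.union Cj).verts := by
      by_contra h
      exact h2 ((Finset.subset_union_right).ssubset_of_ne h)
    have hcard : (Ci.union Cj).verts.card = Ci.verts.card := by rw [hvi]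
    have hcardj : (Ci.union Cj).verts.card = Cj.verts.card := by rw [hvj]
    have ha := hIso.2
    have hbi := hi.2.2.1.2
    have hbj := hj.2.2.1.2
    have hei : Ci.edges = (Ci.union Cj).edges :=
      Finset.eq_of_subset_of_card_le Finset.subset_union_left (by omega)
    have hej : Cj.edges = (Ci.union Cj).edges :=
      Finset.eq_of_subset_of_card_le Finset.subset_union_right (by omega)
    exact hij (CGraph.ext' (hvi.trans hvj.symm) (hei.trans hej.symm))
  · intro h
    rw [h]; exact hC
end

section
/- Let C be an isostatic graph and let C_i and C_j be two distinct clusters of C such that C_i ∪ C_j is isostatic (equivalently, C_i ∪ C_j = C). Then for every cluster C_k of C with C_k ≠ C_i, the union C_i ∪ C_k is isostatic; equivalently, C_i ∪ C_k = C. -/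
namespace CGraph

variable {α : Type} [DecidableEq α]

lemma ext'_s4 {G H : CGraph α} (hv : G.verts = H.verts) (he : G.edges = H.edges) : G = H := by
  cases G; cases H; simp_all

@[simp] lemma union_verts (G H : CGraph α) : (G.union H).verts = G.verts ∪ H.verts := rfl
@[simp] lemma union_edges (G H : CGraph α) : (G.union H).edges = G.edges ∪ H.edges := rfl
@[simp] lemma inter_verts (G H : CGraph α) : (G.inter H).verts = G.verts ∩ H.verts := rfl
@[simp] lemma inter_edges (G H : CGraph α) : (G.inter H).edges = G.edges ∩ H.edges := rfl

lemma two_le_card_verts {G : CGraph α} (h : G.Isostatic) : 2 ≤ G.verts.card := by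
  have := h.2; omega

lemma sub_trans {A B C : CGraph α} (h1 : A.IsSubgraph B) (h2 : B.IsSubgraph C) :
    A.IsSubgraph C :=
  ⟨h1.1.trans h2.1, h1.2.trans h2.2⟩

lemma union_subgraph_of {A B C : CGraph α} (h1 : A.IsSubgraph C) (h2 : B.IsSubgraph C) :
    (A.union B).IsSubgraph C :=
  ⟨Finset.union_subset h1.1 h2.1, Finset.union_subset h1.2 h2.2⟩

/-- If an edge lies in both `G` and `H`, the vertex sets of `G` and `H` share at
least two common vertices. -/
lemma endpoints_two_le {G H : CGraph α} {e : Sym2 α} (hG : e ∈ G.edges) (hH : e ∈ H.edges) :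
    2 ≤ (G.verts ∩ H.verts).card := by
  induction e using Sym2.ind with
  | _ u v =>
    have hne : u ≠ v := by
      intro h
      exact G.not_diag _ hG (by simp [h])
    have hu : u ∈ G.verts ∩ H.verts := Finset.mem_inter.2
      ⟨G.endpoints_mem _ hG u (by simp), H.endpoints_mem _ hH u (by simp)⟩
    have hv : v ∈ G.verts ∩ H.verts := Finset.mem_inter.2
      ⟨G.endpoints_mem _ hG v (by simp), H.endpoints_mem _ hH v (by simp)⟩
    exact Finset.one_lt_card.2 ⟨u, hu, v, hv, hne⟩

/-- If two isostatic subgraphs of an isostatic graph share at least two vertices,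
their union is isostatic. -/
lemma union_isostatic_of_inter {C Ci Ck : CGraph α} (hC : C.Isostatic)
    (hiC : Ci.IsSubgraph C) (hkC : Ck.IsSubgraph C)
    (hi : Ci.Isostatic) (hk : Ck.Isostatic)
    (hint : 2 ≤ (Ci.verts ∩ Ck.verts).card) :
    (Ci.union Ck).Isostatic := by
  have hUC : (Ci.union Ck).IsSubgraph C := union_subgraph_of hiC hkC
  have hsp : (Ci.union Ck).Sparse23 := fun H hH h2 => hC.1 H (sub_trans hH hUC) h2
  refine ⟨hsp, ?_⟩
  have hIC : (Ci.inter Ck).IsSubgraph C :=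
    ⟨Finset.inter_subset_left.trans hiC.1, Finset.inter_subset_left.trans hiC.2⟩
  have hEI := hC.1 (Ci.inter Ck) hIC (by simpa using hint)
  have h2v : 2 ≤ (Ci.union Ck).verts.card :=
    le_trans (two_le_card_verts hi) (Finset.card_le_card (by simp [Finset.subset_union_left]))
  have hle := hC.1 (Ci.union Ck) hUC h2v
  have hveq := Finset.card_union_add_card_inter Ci.verts Ck.verts
  have heeq := Finset.card_union_add_card_inter Ci.edges Ck.edges
  have h1 := hi.2
  have h2 := hk.2
  simp only [union_verts, union_edges, inter_verts, inter_edges] at *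
  omega

/-- An isostatic union of two distinct clusters must be the whole graph. -/
lemma union_eq_of_isostatic {C Ci Ck : CGraph α} (hC : C.Isostatic)
    (hi : IsCluster Ci C) (hk : IsCluster Ck C) (hki : Ck ≠ Ci)
    (hU : (Ci.union Ck).Isostatic) : Ci.union Ck = C := by
  by_contra hne
  have hUC : (Ci.union Ck).IsSubgraph C := union_subgraph_of hi.1 hk.1
  have hnss := hi.2.2.2 (Ci.union Ck) hUC hne hU
  have hsub : Ci.verts ⊆ (Ci.union Ck).verts := by simp [Finset.subset_union_left]
  have hveq : Ci.verts = (Ci.union Ck).verts := by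
    by_contra h
    exact hnss (Finset.ssubset_iff_subset_ne.2 ⟨hsub, h⟩)
  have hvki : Ck.verts ⊆ Ci.verts := by
    have : Ck.verts ⊆ (Ci.union Ck).verts := by simp [Finset.subset_union_right]
    rwa [← hveq] at this
  have hcard : (Ci.union Ck).edges.card = Ci.edges.card := by
    have h1 := hU.2
    have h2 := hi.2.2.1.2
    rw [← hveq] at h1
    omega
  have hEsub : Ci.edges ⊆ (Ci.union Ck).edges := by simp [Finset.subset_union_left]
  have hEeq : Ci.edges = (Ci.union Ck).edges :=
    Finset.eq_of_subset_of_card_le hEsub (by omega)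
  have hEki : Ck.edges ⊆ Ci.edges := by
    rw [hEeq]; simp [Finset.subset_union_right]
  -- now `Ck` is a subgraph of `Ci`; maximality of `Ck` forces `Ck = Ci`
  have hnss2 := hk.2.2.2 Ci hi.1 hi.2.1 hi.2.2.1
  have hveq2 : Ck.verts = Ci.verts := by
    by_contra h
    exact hnss2 (Finset.ssubset_iff_subset_ne.2 ⟨hvki, h⟩)
  have hcard2 : Ci.edges.card ≤ Ck.edges.card := by
    have h1 := hi.2.2.1.2
    have h2 := hk.2.2.1.2
    rw [hveq2] at h2
    omega
  exact hki (ext'_s4 hveq2 (Finset.eq_of_subset_of_card_le hEki hcard2))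

end CGraph

/-- If distinct clusters `Ci, Cj` of an isostatic graph `C` have isostatic
union (equivalently `Ci ∪ Cj = C`), then for every cluster `Ck ≠ Ci` of `C`, `Ci ∪ Ck`
is isostatic; equivalently `Ci ∪ Ck = C`. -/
theorem cluster_union_isostatic_forall
    {α : Type} [DecidableEq α] (C Ci Cj : CGraph α)
    (hC : C.Isostatic)
    (hi : CGraph.IsCluster Ci C) (hj : CGraph.IsCluster Cj C) (hij : Ci ≠ Cj)
    (hU : (Ci.union Cj).Isostatic) :
    ∀ Ck : CGraph α, CGraph.IsCluster Ck C → Ck ≠ Ci →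
      (Ci.union Ck).Isostatic ∧ Ci.union Ck = C := by
  intro Ck hk hki
  have hijC : Ci.union Cj = C := CGraph.union_eq_of_isostatic hC hi hj (Ne.symm hij) hU
  by_cases hkj : Ck = Cj
  · subst hkj
    exact ⟨hU, hijC⟩
  · -- show `Ci` and `Ck` share at least two vertices
    have hint : 2 ≤ (Ci.verts ∩ Ck.verts).card := by
      by_contra h
      have hcard1 : (Ci.verts ∩ Ck.verts).card ≤ 1 := by omega
      -- every edge of `Ck` lies in `Cj`
      have hEk_sub_Ej : Ck.edges ⊆ Cj.edges := by
        intro e he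
        have heC : e ∈ C.edges := hk.1.2 he
        rw [← hijC] at heC
        rcases Finset.mem_union.1 heC with h1 | h1
        · exact absurd (CGraph.endpoints_two_le h1 he) (by omega)
        · exact h1
      by_cases hsub : Ck.verts ⊆ Cj.verts
      · -- `Ck` is a subgraph of `Cj`, contradicting maximality / distinctness
        have hnss := hk.2.2.2 Cj hj.1 hj.2.1 hj.2.2.1
        have hveq : Ck.verts = Cj.verts := by
          by_contra h'
          exact hnss (Finset.ssubset_iff_subset_ne.2 ⟨hsub, h'⟩)
        have hcard2 : Cj.edges.card ≤ Ck.edges.card := by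
          have h1 := hk.2.2.1.2
          have h2 := hj.2.2.1.2
          rw [hveq] at h1
          omega
        exact hkj (CGraph.ext'_s4 hveq (Finset.eq_of_subset_of_card_le hEk_sub_Ej hcard2))
      · obtain ⟨v, hvk, hvj⟩ := Finset.not_subset.1 hsub
        by_cases h2 : 2 ≤ (Ck.verts ∩ Cj.verts).card
        · -- counting contradiction on the subgraph `(Vk ∩ Vj, Ek)`
          have hlt : (Ck.verts ∩ Cj.verts).card < Ck.verts.card := by
            refine Finset.card_lt_card (Finset.ssubset_iff_subset_ne.2
              ⟨Finset.inter_subset_left, fun h' => hvj ?_⟩)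
            rw [← h'] at hvk
            exact (Finset.mem_inter.1 hvk).2
          let H : CGraph α :=
            ⟨Ck.verts ∩ Cj.verts, Ck.edges, Ck.not_diag, fun e he w hw =>
              Finset.mem_inter.2 ⟨Ck.endpoints_mem e he w hw,
                Cj.endpoints_mem e (hEk_sub_Ej he) w hw⟩⟩
          have hHsub : CGraph.IsSubgraph H C :=
            ⟨Finset.inter_subset_left.trans hk.1.1, hk.1.2⟩
          have hcount := hC.1 H hHsub h2
          have hkc := hk.2.2.1.2
          have hHv : H.verts = Ck.verts ∩ Cj.verts := rfl
          have hHe : H.edges = Ck.edges := rfl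
          rw [hHv, hHe] at hcount
          omega
        · -- `Ck` has an edge whose endpoints lie in `Vk ∩ Vj`, contradiction
          have hpos : 1 ≤ Ck.edges.card := by
            have h1 := hk.2.2.1.2
            have h2' := CGraph.two_le_card_verts hk.2.2.1
            omega
          obtain ⟨e, he⟩ := Finset.card_pos.1 (show 0 < Ck.edges.card by omega)
          exact h2 (CGraph.endpoints_two_le he (hEk_sub_Ej he))
    have hUik := CGraph.union_isostatic_of_inter hC hi.1 hk.1 hi.2.2.1 hk.2.2.1 hint
    exact ⟨hUik, CGraph.union_eq_of_isostatic hC hi hk hki hUik⟩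
end

section
/- Let C be an isostatic graph and let C_i and C_j be two distinct clusters of C with C_i ∪ C_j isostatic (equivalently, C_i ∪ C_j = C). Then no edge of C has one endpoint in V(C) \ V(C_i) and the other endpoint in V(C) \ V(C_j); that is, there are no edges of C between the vertex set of C \ C_i and the vertex set of C \ C_j. -/
/-- If distinct clusters `Ci, Cj` of an isostatic graph `C` satisfy
`Ci ∪ Cj` isostatic (equivalently `Ci ∪ Cj = C`), then no edge of `C` has one endpoint
in `V(C) \ V(Ci)` and the other endpoint in `V(C) \ V(Cj)`. -/
theorem no_edges_between_complements
    {α : Type} [DecidableEq α] (C Ci Cj : CGraph α)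
    (hC : C.Isostatic)
    (hi : CGraph.IsCluster Ci C) (hj : CGraph.IsCluster Cj C) (hij : Ci ≠ Cj)
    (hU : (Ci.union Cj).Isostatic) :
    ∀ u v : α, s(u, v) ∈ C.edges →
      ¬ (u ∈ C.verts \ Ci.verts ∧ v ∈ C.verts \ Cj.verts) := by
  intro u v he ⟨hu, hv⟩
  obtain ⟨huC, huCi⟩ := Finset.mem_sdiff.1 hu
  obtain ⟨hvC, hvCj⟩ := Finset.mem_sdiff.1 hv
  set U := Ci.union Cj with hUdef
  have hsubU : U.IsSubgraph C :=
    ⟨Finset.union_subset hi.1.1 hj.1.1, Finset.union_subset hi.1.2 hj.1.2⟩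
  by_cases hUC : U = C
  · have hmem : s(u, v) ∈ U.edges := by rw [hUC]; exact he
    rcases Finset.mem_union.1 hmem with h | h
    · exact huCi (Ci.endpoints_mem _ h u (by simp))
    · exact hvCj (Cj.endpoints_mem _ h v (by simp))
  · have hvU_i : U.verts = Ci.verts := by
      have hmax := hi.2.2.2 U hsubU hUC hU
      have hsub : Ci.verts ⊆ U.verts := Finset.subset_union_left
      exact ((lt_or_eq_of_le hsub).resolve_left hmax).symm
    have hvU_j : U.verts = Cj.verts := by
      have hmax := hj.2.2.2 U hsubU hUC hU
      have hsub : Cj.verts ⊆ U.verts := Finset.subset_union_right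
      exact ((lt_or_eq_of_le hsub).resolve_left hmax).symm
    have hcardU := hU.2
    have hcardi := hi.2.2.1.2
    have hcardj := hj.2.2.1.2
    rw [hvU_i] at hcardU
    have hei : Ci.edges = U.edges :=
      Finset.eq_of_subset_of_card_le Finset.subset_union_left (by omega)
    rw [← hvU_j, hvU_i] at hcardj
    have hej : Cj.edges = U.edges :=
      Finset.eq_of_subset_of_card_le Finset.subset_union_right (by omega)
    apply hij
    cases Ci; cases Cj
    simp only [CGraph.mk.injEq]
    constructor
    · have : _ = _ := hvU_i.symm.trans hvU_j
      exact this
    · exact hei.trans hej.symm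
end

section
/- Let C be an isostatic graph, let C_1,…,C_N be the set of all clusters of C with N ≥ 2, and suppose every pair of distinct clusters among C_1,…,C_N has trivial intersection. Then for every subset S ⊊ {1,…,N} with |S| ≥ 2, the union ⋃_{i∈S} C_i is not isostatic; moreover, for every proper subset S ⊊ {1,…,N}, the union ⋃_{i∈S} C_i is not equal to C. -/
/-- If `C₁, …, C_N` (`N ≥ 2`) are all the clusters of an isostatic graph
`C` and every pair of distinct clusters intersects trivially, then for every proper
subset `S ⊊ {1,…,N}`: if `|S| ≥ 2` the union `⋃_{i ∈ S} C_i` is not isostatic, and in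
any case this union is not equal to `C`. -/
theorem proper_subset_union_not_isostatic
    {α : Type} [DecidableEq α] (C : CGraph α) (hC : C.Isostatic)
    (N : ℕ) (hN : 2 ≤ N) (Cl : Fin N → CGraph α)
    (hinj : Function.Injective Cl)
    (hall : ∀ D : CGraph α, CGraph.IsCluster D C ↔ ∃ i : Fin N, Cl i = D)
    (htriv : ∀ i j : Fin N, i ≠ j → ((Cl i).inter (Cl j)).Trivial) :
    ∀ S : Finset (Fin N), S ≠ Finset.univ →
      ∀ U : CGraph α,
        U.verts = S.biUnion (fun i => (Cl i).verts) →
        U.edges = S.biUnion (fun i => (Cl i).edges) →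
        (2 ≤ S.card → ¬ U.Isostatic) ∧ U ≠ C := by
  intro S hS U hUv hUe
  have hcl : ∀ i : Fin N, CGraph.IsCluster (Cl i) C := fun i => (hall (Cl i)).2 ⟨i, rfl⟩
  have hsub : ∀ i, (Cl i).IsSubgraph C := fun i => (hcl i).1
  have hiso : ∀ i, (Cl i).Isostatic := fun i => (hcl i).2.2.1
  have hverts2 : ∀ i, 2 ≤ (Cl i).verts.card := by
    intro i
    have h := (hiso i).2
    by_contra h'
    push_neg at h'
    omega
  have hedge : ∀ i, (Cl i).edges.Nonempty := by
    intro i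
    have h := (hiso i).2
    have := hverts2 i
    rw [← Finset.card_pos]
    omega
  have hUsub : U.IsSubgraph C := by
    constructor
    · rw [hUv]; intro v hv
      obtain ⟨i, _, hvi⟩ := Finset.mem_biUnion.1 hv
      exact (hsub i).1 hvi
    · rw [hUe]; intro e he
      obtain ⟨i, _, hei⟩ := Finset.mem_biUnion.1 he
      exact (hsub i).2 hei
  have hUneC : U ≠ C := by
    intro hEq
    obtain ⟨j, hjS⟩ : ∃ j, j ∉ S := by
      by_contra h; push_neg at h
      exact hS (Finset.eq_univ_iff_forall.2 h)
    obtain ⟨e, he⟩ := hedge j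
    have heC : e ∈ C.edges := (hsub j).2 he
    have heU : e ∈ U.edges := by rw [hEq]; exact heC
    rw [hUe] at heU
    obtain ⟨i, hiS, hei⟩ := Finset.mem_biUnion.1 heU
    have hij : i ≠ j := fun h => hjS (h ▸ hiS)
    obtain ⟨⟨u, v⟩, rfl⟩ := e.exists_rep
    have huv : u ≠ v := by
      intro h; exact (Cl j).not_diag _ he (by simp [h])
    have hmem : ∀ w ∈ (s(u,v) : Sym2 α), w ∈ ((Cl i).inter (Cl j)).verts := by
      intro w hw
      exact Finset.mem_inter.2 ⟨(Cl i).endpoints_mem _ hei w hw,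
        (Cl j).endpoints_mem _ he w hw⟩
    have h2 : 2 ≤ ((Cl i).inter (Cl j)).verts.card := by
      have hss : ({u, v} : Finset α) ⊆ ((Cl i).inter (Cl j)).verts := by
        intro w hw
        rcases Finset.mem_insert.1 hw with rfl | hw
        · exact hmem w (Sym2.mem_mk_left _ _)
        · rw [Finset.mem_singleton.1 hw]; exact hmem v (Sym2.mem_mk_right _ _)
      calc 2 = ({u, v} : Finset α).card := (Finset.card_pair huv).symm
        _ ≤ _ := Finset.card_le_card hss
    have ht := htriv i j hij
    unfold CGraph.Trivial at ht
    omega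
  refine ⟨?_, hUneC⟩
  intro hScard hUiso
  obtain ⟨i, hiS⟩ := Finset.card_pos.1 (by omega : 0 < S.card)
  obtain ⟨k, hkS, hki⟩ := Finset.exists_mem_ne (show 1 < S.card by omega) i
  have htriv' := htriv k i hki
  have hex : ∃ v ∈ (Cl k).verts, v ∉ (Cl i).verts := by
    by_contra h; push_neg at h
    have hsub' : (Cl k).verts ⊆ ((Cl k).inter (Cl i)).verts :=
      fun v hv => Finset.mem_inter.2 ⟨hv, h v hv⟩
    have h1 := Finset.card_le_card hsub'
    have h2 := hverts2 k
    unfold CGraph.Trivial at htriv'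
    omega
  obtain ⟨v, hvk, hvi⟩ := hex
  have hssubset : (Cl i).verts ⊂ U.verts := by
    constructor
    · rw [hUv]; intro w hw; exact Finset.mem_biUnion.2 ⟨i, hiS, hw⟩
    · intro hcon
      exact hvi (hcon (by rw [hUv]; exact Finset.mem_biUnion.2 ⟨k, hkS, hvk⟩))
  exact (hcl i).2.2.2 U hUsub hUneC hUiso hssubset
end

section
/- Let F be a (2,0)-tight graph and let F_i and F_j be subgraphs of F, each of which is either a single edge (an edge together with its two endpoints) or a connected (2,0)-tight subgraph. Assume F_i ∩ F_j is nonempty and neither of F_i, F_j is a subgraph of the other. Then: (1) at least one of F_i, F_j is a single edge, if and only if F_i ∪ F_j is underconstrained in the pinned sense, if and only if F_i ∩ F_j is trivial in the pinned sense; and (2) both F_i and F_j are (2,0)-tight, if and only if F_i ∪ F_j is (2,0)-tight, if and only if F_i ∩ F_j is (2,0)-tight. -/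
namespace CGraph

variable {α : Type} [DecidableEq α]

/-- (2,0)-sparsity: every subgraph satisfies `|E'| ≤ 2|V'|`. -/
def Sparse20 (G : CGraph α) : Prop :=
  ∀ H : CGraph α, H.IsSubgraph G → H.edges.card ≤ 2 * H.verts.card

/-- (2,0)-tight (isostatic in the pinned sense): (2,0)-sparse with `|E| = 2|V|`. -/
def Tight20 (G : CGraph α) : Prop :=
  G.Sparse20 ∧ G.edges.card = 2 * G.verts.card

/-- Trivial in the pinned sense: exactly one vertex and no edges. -/
def TrivialPinned (G : CGraph α) : Prop :=
  G.verts.card = 1 ∧ G.edges = ∅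

/-- Underconstrained in the pinned sense: (2,0)-sparse, at least one vertex,
and `|E| < 2|V|`. -/
def UnderconstrainedPinned (G : CGraph α) : Prop :=
  G.Sparse20 ∧ 1 ≤ G.verts.card ∧ G.edges.card < 2 * G.verts.card

/-- Connectivity: the vertex set is nonempty and any two vertices are joined by a
path of edges. -/
def Connected (G : CGraph α) : Prop :=
  G.verts.Nonempty ∧ ∀ u ∈ G.verts, ∀ v ∈ G.verts,
    Relation.ReflTransGen (fun a b => s(a, b) ∈ G.edges) u v

/-- A pinned cluster of `C`: a proper subgraph of `C` that is connected and
(2,0)-tight, and vertex-maximal among connected (2,0)-tight proper subgraphs of `C`. -/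
def IsPinnedCluster (D C : CGraph α) : Prop :=
  D.IsSubgraph C ∧ D ≠ C ∧ D.Connected ∧ D.Tight20 ∧
  ∀ D' : CGraph α, D'.IsSubgraph C → D' ≠ C → D'.Connected → D'.Tight20 →
    ¬ D.verts ⊂ D'.verts

/-- Every pair of distinct pinned clusters of `C` has trivial intersection
(in the pinned sense). -/
def PinnedPairwiseTrivialClusters (C : CGraph α) : Prop :=
  ∀ D₁ D₂ : CGraph α, IsPinnedCluster D₁ C → IsPinnedCluster D₂ C → D₁ ≠ D₂ →
    (D₁.inter D₂).TrivialPinned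

/-- An edge of `C` not contained in any proper (2,0)-tight subgraph of `C`. -/
def IsFreeEdge (e : Sym2 α) (C : CGraph α) : Prop :=
  e ∈ C.edges ∧ ∀ D : CGraph α, D.IsSubgraph C → D ≠ C → D.Tight20 → e ∉ D.edges

end CGraph

namespace CGraph

variable {α : Type} [DecidableEq α]

lemma IsSubgraph.trans' {G H K : CGraph α} (h1 : G.IsSubgraph H) (h2 : H.IsSubgraph K) :
    G.IsSubgraph K := ⟨h1.1.trans h2.1, h1.2.trans h2.2⟩

lemma sparse20_mono {G H : CGraph α} (hG : G.Sparse20) (h : H.IsSubgraph G) : H.Sparse20 :=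
  fun K hK => hG K (hK.trans' h)

lemma inter_subgraph_left (G H : CGraph α) : (G.inter H).IsSubgraph G :=
  ⟨Finset.inter_subset_left, Finset.inter_subset_left⟩

lemma union_subgraph {G H K : CGraph α} (hG : G.IsSubgraph K) (hH : H.IsSubgraph K) :
    (G.union H).IsSubgraph K :=
  ⟨Finset.union_subset hG.1 hH.1, Finset.union_subset hG.2 hH.2⟩

lemma single_not_tight {G : CGraph α} (hs : G.IsSingleEdge) : ¬ G.Tight20 := by
  obtain ⟨u, v, huv, hV, hE⟩ := hs
  intro ht
  have h1 : G.edges.card = 1 := by rw [hE]; simp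
  have h2 : G.verts.card = 2 := by rw [hV]; exact Finset.card_pair huv
  have := ht.2
  omega

lemma single_edge_case (F Fi Fj : CGraph α) (hF : F.Tight20)
    (hi : Fi.IsSubgraph F) (hj : Fj.IsSubgraph F)
    (hFi : Fi.IsSingleEdge)
    (hFj : Fj.IsSingleEdge ∨ (Fj.Connected ∧ Fj.Tight20))
    (hne : (Fi.inter Fj).verts.Nonempty)
    (hns : ¬ Fi.IsSubgraph Fj) :
    (Fi.inter Fj).TrivialPinned ∧
      (Fi.union Fj).edges.card < 2 * (Fi.union Fj).verts.card := by
  obtain ⟨u, v, huv, hV, hE⟩ := hFi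
  have heNot : s(u, v) ∉ Fj.edges := by
    intro he
    apply hns
    constructor
    · rw [hV]
      intro w hw
      simp only [Finset.mem_insert, Finset.mem_singleton] at hw
      apply Fj.endpoints_mem _ he w
      rcases hw with rfl | rfl <;> simp [Sym2.mem_iff]
    · rw [hE]
      simpa using he
  have hEint : Fi.edges ∩ Fj.edges = ∅ := by
    rw [hE]
    ext f
    simp only [Finset.mem_inter, Finset.mem_singleton, Finset.notMem_empty, iff_false, not_and]
    rintro rfl hf
    exact heNot hf
  have hEi1 : Fi.edges.card = 1 := by rw [hE]; simp
  have hVi2 : Fi.verts.card = 2 := by rw [hV]; exact Finset.card_pair huv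
  have hnotboth : ¬ (u ∈ Fj.verts ∧ v ∈ Fj.verts) := by
    rintro ⟨hu, hv⟩
    rcases hFj with ⟨x, y, hxy, hVj, hEj⟩ | ⟨hconn, htj⟩
    · rw [hVj] at hu hv
      simp only [Finset.mem_insert, Finset.mem_singleton] at hu hv
      have hsym : s(u, v) = s(x, y) := by
        rcases hu with rfl | rfl <;> rcases hv with rfl | rfl
        · exact absurd rfl huv
        · rfl
        · exact Sym2.eq_swap
        · exact absurd rfl huv
      exact heNot (hsym ▸ (by rw [hEj]; simp))
    · -- Fj tight: adding the edge violates sparsity of F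
      have hVsub : Fi.verts ⊆ Fj.verts := by
        rw [hV]
        intro w hw
        simp only [Finset.mem_insert, Finset.mem_singleton] at hw
        rcases hw with rfl | rfl
        exacts [hu, hv]
      have hVu : (Fi.union Fj).verts = Fj.verts := Finset.union_eq_right.mpr hVsub
      have hsp := hF.1 _ (union_subgraph hi hj)
      have hEc := Finset.card_union_add_card_inter Fi.edges Fj.edges
      have e1 : (Fi.union Fj).edges = Fi.edges ∪ Fj.edges := rfl
      rw [e1, hVu] at hsp
      rw [hEint] at hEc
      have := htj.2
      simp only [Finset.card_empty] at hEc
      omega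
  -- intersection has exactly one vertex
  have hsub : (Fi.inter Fj).verts ⊆ Fi.verts := Finset.inter_subset_left
  have h1 : 1 ≤ (Fi.inter Fj).verts.card := hne.card_pos
  have h2 : (Fi.inter Fj).verts.card < 2 := by
    by_contra h
    push_neg at h
    have heq : (Fi.inter Fj).verts = Fi.verts :=
      Finset.eq_of_subset_of_card_le hsub (by omega)
    apply hnotboth
    have hu : u ∈ (Fi.inter Fj).verts := by
      rw [heq, hV]; simp
    have hv : v ∈ (Fi.inter Fj).verts := by
      rw [heq, hV]; simp
    exact ⟨(Finset.mem_inter.1 hu).2, (Finset.mem_inter.1 hv).2⟩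
  have hVic : (Fi.inter Fj).verts.card = 1 := by omega
  refine ⟨⟨hVic, hEint⟩, ?_⟩
  have hVc := Finset.card_union_add_card_inter Fi.verts Fj.verts
  have hEc := Finset.card_union_add_card_inter Fi.edges Fj.edges
  have hjE := hF.1 Fj hj
  have e1 : (Fi.union Fj).edges = Fi.edges ∪ Fj.edges := rfl
  have e2 : (Fi.union Fj).verts = Fi.verts ∪ Fj.verts := rfl
  have e3 : (Fi.inter Fj).verts = Fi.verts ∩ Fj.verts := rfl
  rw [e3] at hVic
  rw [hEint] at hEc
  simp only [Finset.card_empty] at hEc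
  rw [e1, e2]
  omega

lemma tight_tight_case (F Fi Fj : CGraph α) (hF : F.Tight20)
    (hi : Fi.IsSubgraph F) (hj : Fj.IsSubgraph F)
    (hti : Fi.Tight20) (htj : Fj.Tight20) :
    (Fi.union Fj).Tight20 ∧ (Fi.inter Fj).Tight20 := by
  have hu := hF.1 _ (union_subgraph hi hj)
  have hv := hF.1 _ ((inter_subgraph_left Fi Fj).trans' hi)
  have hVc := Finset.card_union_add_card_inter Fi.verts Fj.verts
  have hEc := Finset.card_union_add_card_inter Fi.edges Fj.edges
  have h1 := hti.2
  have h2 := htj.2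
  have e1 : (Fi.union Fj).edges = Fi.edges ∪ Fj.edges := rfl
  have e2 : (Fi.union Fj).verts = Fi.verts ∪ Fj.verts := rfl
  have e3 : (Fi.inter Fj).edges = Fi.edges ∩ Fj.edges := rfl
  have e4 : (Fi.inter Fj).verts = Fi.verts ∩ Fj.verts := rfl
  rw [e1, e2] at hu
  rw [e3, e4] at hv
  refine ⟨⟨sparse20_mono hF.1 (union_subgraph hi hj), ?_⟩,
    ⟨sparse20_mono hF.1 ((inter_subgraph_left Fi Fj).trans' hi), ?_⟩⟩
  · rw [e1, e2]; omega
  · rw [e3, e4]; omega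

end CGraph

/-- Let `F` be (2,0)-tight and `Fi, Fj` subgraphs of `F`, each either a
single edge or a connected (2,0)-tight subgraph, with nonempty intersection and neither
contained in the other. Then: (1) at least one of `Fi, Fj` is a single edge, iff
`Fi ∪ Fj` is underconstrained in the pinned sense, iff `Fi ∩ Fj` is trivial in the
pinned sense; and (2) both `Fi` and `Fj` are (2,0)-tight, iff `Fi ∪ Fj` is (2,0)-tight,
iff `Fi ∩ Fj` is (2,0)-tight. -/
theorem pinned_union_inter_cases
    {α : Type} [DecidableEq α] (F Fi Fj : CGraph α)
    (hF : F.Tight20)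
    (hFiSub : Fi.IsSubgraph F) (hFjSub : Fj.IsSubgraph F)
    (hFi : Fi.IsSingleEdge ∨ (Fi.Connected ∧ Fi.Tight20))
    (hFj : Fj.IsSingleEdge ∨ (Fj.Connected ∧ Fj.Tight20))
    (hne : (Fi.inter Fj).verts.Nonempty)
    (hns₁ : ¬ Fi.IsSubgraph Fj) (hns₂ : ¬ Fj.IsSubgraph Fi) :
    (((Fi.IsSingleEdge ∨ Fj.IsSingleEdge) ↔ (Fi.union Fj).UnderconstrainedPinned) ∧
     ((Fi.union Fj).UnderconstrainedPinned ↔ (Fi.inter Fj).TrivialPinned)) ∧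
    (((Fi.Tight20 ∧ Fj.Tight20) ↔ (Fi.union Fj).Tight20) ∧
     ((Fi.union Fj).Tight20 ↔ (Fi.inter Fj).Tight20)) := by
  classical
  -- commutativity conversions
  have civ : (Fi.inter Fj).verts = (Fj.inter Fi).verts := Finset.inter_comm _ _
  have cie : (Fi.inter Fj).edges = (Fj.inter Fi).edges := Finset.inter_comm _ _
  have cuv : (Fi.union Fj).verts = (Fj.union Fi).verts := Finset.union_comm _ _
  have cue : (Fi.union Fj).edges = (Fj.union Fi).edges := Finset.union_comm _ _
  have hcover : (Fi.IsSingleEdge ∨ Fj.IsSingleEdge) ∨ (Fi.Tight20 ∧ Fj.Tight20) := by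
    rcases hFi with h | h
    · exact Or.inl (Or.inl h)
    · rcases hFj with h' | h'
      · exact Or.inl (Or.inr h')
      · exact Or.inr ⟨h.2, h'.2⟩
  have hsingle_imp : (Fi.IsSingleEdge ∨ Fj.IsSingleEdge) →
      (Fi.inter Fj).TrivialPinned ∧
        (Fi.union Fj).edges.card < 2 * (Fi.union Fj).verts.card := by
    rintro (h | h)
    · exact CGraph.single_edge_case F Fi Fj hF hFiSub hFjSub h hFj hne hns₁
    · have hne' : (Fj.inter Fi).verts.Nonempty := by rwa [← civ]
      have := CGraph.single_edge_case F Fj Fi hF hFjSub hFiSub h hFi hne' hns₂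
      refine ⟨⟨?_, ?_⟩, ?_⟩
      · rw [civ]; exact this.1.1
      · rw [cie]; exact this.1.2
      · rw [cue, cuv]; exact this.2
  have htight_imp : (Fi.Tight20 ∧ Fj.Tight20) →
      (Fi.union Fj).Tight20 ∧ (Fi.inter Fj).Tight20 := fun h =>
    CGraph.tight_tight_case F Fi Fj hF hFiSub hFjSub h.1 h.2
  have hpos : 1 ≤ (Fi.union Fj).verts.card := by
    have : (Fi.union Fj).verts.Nonempty := by
      obtain ⟨x, hx⟩ := hne
      exact ⟨x, Finset.mem_union_left _ ((Finset.mem_inter.1 hx).1)⟩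
    exact this.card_pos
  have hunder : (Fi.IsSingleEdge ∨ Fj.IsSingleEdge) → (Fi.union Fj).UnderconstrainedPinned :=
    fun h => ⟨CGraph.sparse20_mono hF.1 (CGraph.union_subgraph hFiSub hFjSub), hpos,
      (hsingle_imp h).2⟩
  refine ⟨⟨⟨hunder, ?_⟩, ?_, ?_⟩, ⟨fun h => (htight_imp h).1, ?_⟩, ?_, ?_⟩
  · -- underconstrained → single edge
    intro h
    rcases hcover with hp | hq
    · exact hp
    · exact absurd ((htight_imp hq).1.2) (by have := h.2.2; omega)
  · -- underconstrained → trivial inter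
    intro h
    rcases hcover with hp | hq
    · exact (hsingle_imp hp).1
    · exact absurd ((htight_imp hq).1.2) (by have := h.2.2; omega)
  · -- trivial inter → underconstrained
    intro h
    rcases hcover with hp | hq
    · exact hunder hp
    · have ht := (htight_imp hq).2.2
      rw [h.2] at ht
      simp only [Finset.card_empty] at ht
      have := h.1
      omega
  · -- union tight → both tight
    intro h
    rcases hcover with hp | hq
    · exact absurd h.2 (by have := (hsingle_imp hp).2; omega)
    · exact hq
  · -- union tight → inter tight
    intro h
    rcases hcover with hp | hq
    · exact absurd h.2 (by have := (hsingle_imp hp).2; omega)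
    · exact (htight_imp hq).2
  · -- inter tight → union tight
    intro h
    rcases hcover with hp | hq
    · have ht := (hsingle_imp hp).1
      have h2 := h.2
      rw [ht.2] at h2
      simp only [Finset.card_empty] at h2
      have := h2
      have h1 := ht.1
      omega
    · exact (htight_imp hq).1
end

section
/- Every 2-tree is isostatic: if (V,E) is a 2-tree, then |E| = 2|V| − 3, and every subgraph (V',E') with |V'| ≥ 2 satisfies |E'| ≤ 2|V'| − 3. -/
/-- 2-trees, defined recursively: a triangle is a 2-tree, and the 2-sum of two 2-trees
on disjoint vertex sets (obtained by identifying an edge of one with an edge of the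
other, identifying the corresponding endpoint pairs) is a 2-tree. -/
inductive TwoTree {α : Type} [DecidableEq α] : CGraph α → Prop
  | triangle (G : CGraph α) (u v w : α) (huv : u ≠ v) (hvw : v ≠ w) (huw : u ≠ w)
      (hV : G.verts = {u, v, w}) (hE : G.edges = {s(u, v), s(v, w), s(u, w)}) :
      TwoTree G
  | twoSum (G G₁ G₂ : CGraph α) (u v w x : α)
      (h₁ : TwoTree G₁) (h₂ : TwoTree G₂)
      (hdisj : Disjoint G₁.verts G₂.verts)
      (he₁ : s(u, v) ∈ G₁.edges) (he₂ : s(w, x) ∈ G₂.edges)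
      (hV : G.verts = G₁.verts ∪
        G₂.verts.image (fun y => if y = w then u else if y = x then v else y))
      (hE : G.edges = G₁.edges ∪
        G₂.edges.image (Sym2.map (fun y => if y = w then u else if y = x then v else y))) :
      TwoTree G

namespace CGraph

variable {α : Type} [DecidableEq α]

lemma exists_pair (G : CGraph α) {e : Sym2 α} (he : e ∈ G.edges) :
    ∃ a b, a ≠ b ∧ a ∈ G.verts ∧ b ∈ G.verts ∧ e = s(a, b) := by
  induction e using Sym2.inductionOn with
  | hf a b =>
    refine ⟨a, b, ?_, G.endpoints_mem _ he a (by simp), G.endpoints_mem _ he b (by simp), rfl⟩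
    intro h
    exact G.not_diag _ he (by simp [h])

lemma two_le_of_edges_nonempty (G : CGraph α) (h : G.edges.Nonempty) : 2 ≤ G.verts.card := by
  obtain ⟨e, he⟩ := h
  obtain ⟨a, b, hab, ha, hb, -⟩ := G.exists_pair he
  have hsub : ({a, b} : Finset α) ⊆ G.verts := by
    intro z hz
    rcases Finset.mem_insert.1 hz with rfl | hz
    · exact ha
    · rw [Finset.mem_singleton.1 hz]; exact hb
  have : ({a, b} : Finset α).card = 2 := by
    rw [Finset.card_insert_of_notMem (by simpa using hab), Finset.card_singleton]
  calc 2 = ({a, b} : Finset α).card := this.symm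
  _ ≤ G.verts.card := Finset.card_le_card hsub

lemma glue_sparse_core (G₁ G₂ : CGraph α) (u v : α)
    (h1 : G₁.Sparse23) (h2 : G₂.Sparse23)
    (hV : G₁.verts ∩ G₂.verts = {u, v})
    (hE : G₁.edges ∩ G₂.edges = {s(u, v)})
    (H : CGraph α) (hsub : H.IsSubgraph (G₁.union G₂))
    (hcard : 2 ≤ H.verts.card)
    (hclose : u ∈ H.verts → v ∈ H.verts → s(u, v) ∈ H.edges) :
    H.edges.card + 3 ≤ 2 * H.verts.card := by
  set H₁ : CGraph α := ⟨H.verts ∩ G₁.verts, H.edges ∩ G₁.edges,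
    fun e he => H.not_diag e (Finset.mem_inter.1 he).1,
    fun e he z hz => Finset.mem_inter.2 ⟨H.endpoints_mem e (Finset.mem_inter.1 he).1 z hz,
      G₁.endpoints_mem e (Finset.mem_inter.1 he).2 z hz⟩⟩ with hH₁
  set H₂ : CGraph α := ⟨H.verts ∩ G₂.verts, H.edges ∩ G₂.edges,
    fun e he => H.not_diag e (Finset.mem_inter.1 he).1,
    fun e he z hz => Finset.mem_inter.2 ⟨H.endpoints_mem e (Finset.mem_inter.1 he).1 z hz,
      G₂.endpoints_mem e (Finset.mem_inter.1 he).2 z hz⟩⟩ with hH₂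
  have hs1 : H₁.IsSubgraph G₁ := ⟨Finset.inter_subset_right, Finset.inter_subset_right⟩
  have hs2 : H₂.IsSubgraph G₂ := ⟨Finset.inter_subset_right, Finset.inter_subset_right⟩
  have hVsub : H.verts ⊆ G₁.verts ∪ G₂.verts := hsub.1
  have hEsub : H.edges ⊆ G₁.edges ∪ G₂.edges := hsub.2
  have hVU : H₁.verts ∪ H₂.verts = H.verts := by
    show H.verts ∩ G₁.verts ∪ H.verts ∩ G₂.verts = H.verts
    rw [← Finset.inter_union_distrib_left]
    exact Finset.inter_eq_left.2 hVsub
  have hEU : H₁.edges ∪ H₂.edges = H.edges := by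
    show H.edges ∩ G₁.edges ∪ H.edges ∩ G₂.edges = H.edges
    rw [← Finset.inter_union_distrib_left]
    exact Finset.inter_eq_left.2 hEsub
  have hVI : H₁.verts ∩ H₂.verts = H.verts ∩ ({u, v} : Finset α) := by
    rw [← hV]
    show H.verts ∩ G₁.verts ∩ (H.verts ∩ G₂.verts) = _
    ext z
    simp only [Finset.mem_inter]
    tauto
  have hEI : H₁.edges ∩ H₂.edges = H.edges ∩ ({s(u, v)} : Finset (Sym2 α)) := by
    rw [← hE]
    show H.edges ∩ G₁.edges ∩ (H.edges ∩ G₂.edges) = _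
    ext z
    simp only [Finset.mem_inter]
    tauto
  have hcv := Finset.card_union_add_card_inter H₁.verts H₂.verts
  have hce := Finset.card_union_add_card_inter H₁.edges H₂.edges
  rw [hVU, hVI] at hcv
  rw [hEU, hEI] at hce
  have hvo2 : (H.verts ∩ ({u, v} : Finset α)).card ≤ 2 := by
    calc (H.verts ∩ ({u, v} : Finset α)).card ≤ ({u, v} : Finset α).card :=
      Finset.card_le_card Finset.inter_subset_right
    _ ≤ 2 := Finset.card_insert_le _ _ |>.trans (by simp)
  have heo1 : (H.edges ∩ ({s(u, v)} : Finset (Sym2 α))).card ≤ 1 := by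
    calc (H.edges ∩ ({s(u, v)} : Finset (Sym2 α))).card
        ≤ ({s(u, v)} : Finset (Sym2 α)).card := Finset.card_le_card Finset.inter_subset_right
    _ = 1 := Finset.card_singleton _
  have hvoe : (H.verts ∩ ({u, v} : Finset α)).card ≤ 1 ∨
      1 ≤ (H.edges ∩ ({s(u, v)} : Finset (Sym2 α))).card := by
    rcases le_or_gt (H.verts ∩ ({u, v} : Finset α)).card 1 with h | h
    · exact Or.inl h
    · right
      have h2c : ({u, v} : Finset α).card ≤ 2 :=
        (Finset.card_insert_le _ _).trans (by simp)
      have heq : H.verts ∩ ({u, v} : Finset α) = ({u, v} : Finset α) := by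
        apply Finset.eq_of_subset_of_card_le Finset.inter_subset_right
        omega
      have hu : u ∈ H.verts := by
        have : u ∈ H.verts ∩ ({u, v} : Finset α) := by rw [heq]; simp
        exact (Finset.mem_inter.1 this).1
      have hv : v ∈ H.verts := by
        have : v ∈ H.verts ∩ ({u, v} : Finset α) := by rw [heq]; simp
        exact (Finset.mem_inter.1 this).1
      have : s(u, v) ∈ H.edges ∩ ({s(u, v)} : Finset (Sym2 α)) :=
        Finset.mem_inter.2 ⟨hclose hu hv, by simp⟩
      exact Finset.card_pos.2 ⟨_, this⟩
  have hb1 : H₁.edges.card = 0 ∨ H₁.edges.card + 3 ≤ 2 * H₁.verts.card := by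
    rcases Finset.eq_empty_or_nonempty H₁.edges with h | h
    · exact Or.inl (by rw [h]; simp)
    · exact Or.inr (h1 H₁ hs1 (H₁.two_le_of_edges_nonempty h))
  have hb2 : H₂.edges.card = 0 ∨ H₂.edges.card + 3 ≤ 2 * H₂.verts.card := by
    rcases Finset.eq_empty_or_nonempty H₂.edges with h | h
    · exact Or.inl (by rw [h]; simp)
    · exact Or.inr (h2 H₂ hs2 (H₂.two_le_of_edges_nonempty h))
  have hva : (H.verts ∩ ({u, v} : Finset α)).card ≤ H₁.verts.card := by
    rw [← hVI]; exact Finset.card_le_card Finset.inter_subset_left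
  have hvb : (H.verts ∩ ({u, v} : Finset α)).card ≤ H₂.verts.card := by
    rw [← hVI]; exact Finset.card_le_card Finset.inter_subset_right
  rcases hb1 with hb1 | hb1 <;> rcases hb2 with hb2 | hb2 <;> rcases hvoe with hvoe | hvoe <;> omega

lemma glue_sparse (G₁ G₂ : CGraph α) (u v : α) (huv : u ≠ v)
    (h1 : G₁.Sparse23) (h2 : G₂.Sparse23)
    (heu : s(u, v) ∈ G₁.edges)
    (hV : G₁.verts ∩ G₂.verts = {u, v})
    (hE : G₁.edges ∩ G₂.edges = {s(u, v)}) :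
    (G₁.union G₂).Sparse23 := by
  intro H hsub hcard
  by_cases hu : u ∈ H.verts ∧ v ∈ H.verts
  · by_cases he : s(u, v) ∈ H.edges
    · exact glue_sparse_core G₁ G₂ u v h1 h2 hV hE H hsub hcard (fun _ _ => he)
    · set H' : CGraph α := ⟨H.verts, insert s(u, v) H.edges,
        by
          intro e hme
          rcases Finset.mem_insert.1 hme with rfl | hme
          · simp [huv]
          · exact H.not_diag e hme,
        by
          intro e hme z hz
          rcases Finset.mem_insert.1 hme with rfl | hme
          · rcases Sym2.mem_iff.1 hz with rfl | rfl
            · exact hu.1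
            · exact hu.2
          · exact H.endpoints_mem e hme z hz⟩ with hH'
      have hsub' : H'.IsSubgraph (G₁.union G₂) := by
        refine ⟨hsub.1, ?_⟩
        show insert s(u, v) H.edges ⊆ G₁.edges ∪ G₂.edges
        exact Finset.insert_subset (Finset.mem_union_left _ heu) hsub.2
      have hb := glue_sparse_core G₁ G₂ u v h1 h2 hV hE H' hsub' hcard
        (fun _ _ => Finset.mem_insert_self _ _)
      have hc : H'.edges.card = H.edges.card + 1 := Finset.card_insert_of_notMem he
      have hvv : H'.verts.card = H.verts.card := rfl
      omega
  · exact glue_sparse_core G₁ G₂ u v h1 h2 hV hE H hsub hcard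
      (fun h1' h2' => absurd ⟨h1', h2'⟩ hu)

lemma glue_card (G₁ G₂ : CGraph α) (u v : α) (huv : u ≠ v)
    (hV : G₁.verts ∩ G₂.verts = {u, v})
    (hE : G₁.edges ∩ G₂.edges = {s(u, v)})
    (c1 : G₁.edges.card + 3 = 2 * G₁.verts.card)
    (c2 : G₂.edges.card + 3 = 2 * G₂.verts.card) :
    (G₁.union G₂).edges.card + 3 = 2 * (G₁.union G₂).verts.card := by
  have hv := Finset.card_union_add_card_inter G₁.verts G₂.verts
  have he := Finset.card_union_add_card_inter G₁.edges G₂.edges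
  rw [hV] at hv
  rw [hE] at he
  have h2 : ({u, v} : Finset α).card = 2 := by
    rw [Finset.card_insert_of_notMem (by simpa using huv), Finset.card_singleton]
  have h1 : ({s(u, v)} : Finset (Sym2 α)).card = 1 := Finset.card_singleton _
  show (G₁.edges ∪ G₂.edges).card + 3 = 2 * (G₁.verts ∪ G₂.verts).card
  omega

lemma map_injOn_edges (f : α → α) (G : CGraph α) (hf : Set.InjOn f ↑G.verts) :
    Set.InjOn (Sym2.map f) ↑G.edges := by
  intro e₁ h₁ e₂ h₂ heq
  obtain ⟨a, b, -, ha, hb, rfl⟩ := G.exists_pair (Finset.mem_coe.1 h₁)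
  obtain ⟨c, d, -, hc, hd, rfl⟩ := G.exists_pair (Finset.mem_coe.1 h₂)
  simp only [Sym2.map_pair_eq, Sym2.eq_iff] at heq ⊢
  rcases heq with ⟨e1, e2⟩ | ⟨e1, e2⟩
  · exact Or.inl ⟨hf ha hc e1, hf hb hd e2⟩
  · exact Or.inr ⟨hf ha hd e1, hf hb hc e2⟩

lemma map_sparse (f : α → α) (G : CGraph α) (hf : Set.InjOn f ↑G.verts)
    (hsp : G.Sparse23) (G' : CGraph α)
    (hV' : G'.verts = G.verts.image f) (hE' : G'.edges = G.edges.image (Sym2.map f)) :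
    G'.Sparse23 := by
  intro H hsub hcard
  set K : CGraph α := ⟨G.verts.filter (fun y => f y ∈ H.verts),
    G.edges.filter (fun e => Sym2.map f e ∈ H.edges),
    fun e he => G.not_diag e (Finset.mem_filter.1 he).1,
    by
      intro e he z hz
      have h1 := Finset.mem_filter.1 he
      refine Finset.mem_filter.2 ⟨G.endpoints_mem e h1.1 z hz, ?_⟩
      exact H.endpoints_mem _ h1.2 (f z) (Sym2.mem_map.2 ⟨z, hz, rfl⟩)⟩ with hK
  have hKsub : K.IsSubgraph G := ⟨Finset.filter_subset _ _, Finset.filter_subset _ _⟩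
  have hVim : K.verts.image f = H.verts := by
    apply Finset.Subset.antisymm
    · intro z hz
      obtain ⟨y, hy, rfl⟩ := Finset.mem_image.1 hz
      exact (Finset.mem_filter.1 hy).2
    · intro z hz
      have : z ∈ G.verts.image f := hV' ▸ hsub.1 hz
      obtain ⟨y, hy, rfl⟩ := Finset.mem_image.1 this
      exact Finset.mem_image.2 ⟨y, Finset.mem_filter.2 ⟨hy, hz⟩, rfl⟩
  have hEim : K.edges.image (Sym2.map f) = H.edges := by
    apply Finset.Subset.antisymm
    · intro z hz
      obtain ⟨y, hy, rfl⟩ := Finset.mem_image.1 hz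
      exact (Finset.mem_filter.1 hy).2
    · intro z hz
      have : z ∈ G.edges.image (Sym2.map f) := hE' ▸ hsub.2 hz
      obtain ⟨y, hy, rfl⟩ := Finset.mem_image.1 this
      exact Finset.mem_image.2 ⟨y, Finset.mem_filter.2 ⟨hy, hz⟩, rfl⟩
  have hcv : K.verts.card = H.verts.card := by
    rw [← hVim]
    exact (Finset.card_image_of_injOn (hf.mono (by exact_mod_cast hKsub.1))).symm
  have hce : K.edges.card = H.edges.card := by
    rw [← hEim]
    exact (Finset.card_image_of_injOn
      ((map_injOn_edges f G hf).mono (by exact_mod_cast hKsub.2))).symm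
  have := hsp K hKsub (by omega)
  omega

end CGraph

/-- every 2-tree is isostatic: `|E| = 2|V| - 3`, and every subgraph with
at least two vertices satisfies `|E'| ≤ 2|V'| - 3`. -/
theorem twoTree_isostatic
    {α : Type} [DecidableEq α] (G : CGraph α) (h : TwoTree G) :
    G.edges.card + 3 = 2 * G.verts.card ∧ G.Sparse23 := by
  induction h with
  | triangle G u v w huv hvw huw hV hE =>
    have hc3v : ({u, v, w} : Finset α).card = 3 := by
      rw [Finset.card_insert_of_notMem (by simp [huv, huw]),
        Finset.card_insert_of_notMem (by simp [hvw]), Finset.card_singleton]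
    have hne1 : s(u, v) ≠ s(v, w) := by
      intro hq
      rcases Sym2.eq_iff.1 hq with ⟨q1, _⟩ | ⟨q1, _⟩
      · exact huv q1
      · exact huw q1
    have hne2 : s(u, v) ≠ s(u, w) := by
      intro hq
      rcases Sym2.eq_iff.1 hq with ⟨_, q2⟩ | ⟨q1, _⟩
      · exact hvw q2
      · exact huw q1
    have hne3 : s(v, w) ≠ s(u, w) := by
      intro hq
      rcases Sym2.eq_iff.1 hq with ⟨q1, _⟩ | ⟨_, q2⟩
      · exact huv q1.symm
      · exact huw q2.symm
    have hc3e : ({s(u, v), s(v, w), s(u, w)} : Finset (Sym2 α)).card = 3 := by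
      rw [Finset.card_insert_of_notMem (by simp [hne1, hne2]),
        Finset.card_insert_of_notMem (by simp [hne3]), Finset.card_singleton]
    refine ⟨by rw [hV, hE, hc3v, hc3e], ?_⟩
    intro H hsub hc
    have hEle : H.edges.card ≤ 3 := by
      have h1 : H.edges ⊆ ({s(u, v), s(v, w), s(u, w)} : Finset (Sym2 α)) := by
        rw [← hE]; exact hsub.2
      have := Finset.card_le_card h1
      omega
    have hVle : H.verts.card ≤ 3 := by
      have h1 : H.verts ⊆ ({u, v, w} : Finset α) := by rw [← hV]; exact hsub.1
      have := Finset.card_le_card h1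
      omega
    rcases le_or_gt 3 H.verts.card with h3 | h3
    · omega
    · have hE1 : H.edges.card ≤ 1 := by
        rw [Finset.card_le_one]
        intro e₁ he₁' e₂ he₂'
        by_contra hne
        have key : u ∈ H.verts → v ∈ H.verts → w ∈ H.verts → False := by
          intro hmu hmv hmw
          have hsubv : ({u, v, w} : Finset α) ⊆ H.verts := by
            intro z hz
            rcases Finset.mem_insert.1 hz with rfl | hz
            · exact hmu
            rcases Finset.mem_insert.1 hz with rfl | hz
            · exact hmv
            rw [Finset.mem_singleton.1 hz]; exact hmw
          have := Finset.card_le_card hsubv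
          omega
        have hm1 : e₁ ∈ ({s(u, v), s(v, w), s(u, w)} : Finset (Sym2 α)) := by
          rw [← hE]; exact hsub.2 he₁'
        have hm2 : e₂ ∈ ({s(u, v), s(v, w), s(u, w)} : Finset (Sym2 α)) := by
          rw [← hE]; exact hsub.2 he₂'
        simp only [Finset.mem_insert, Finset.mem_singleton] at hm1 hm2
        rcases hm1 with rfl | rfl | rfl <;> rcases hm2 with rfl | rfl | rfl <;>
          first
            | exact hne rfl
            | (refine key ?_ ?_ ?_ <;>
                first
                  | exact H.endpoints_mem _ he₁' _ (Sym2.mem_iff.2 (Or.inl rfl))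
                  | exact H.endpoints_mem _ he₁' _ (Sym2.mem_iff.2 (Or.inr rfl))
                  | exact H.endpoints_mem _ he₂' _ (Sym2.mem_iff.2 (Or.inl rfl))
                  | exact H.endpoints_mem _ he₂' _ (Sym2.mem_iff.2 (Or.inr rfl)))
      omega
  | twoSum G G₁ G₂ u v w x h₁ h₂ hdisj he₁ he₂ hV hE ih₁ ih₂ =>
    set f : α → α := fun y => if y = w then u else if y = x then v else y with hf
    have huv : u ≠ v := fun hq => G₁.not_diag _ he₁ (by simp [hq])
    have hwx : w ≠ x := fun hq => G₂.not_diag _ he₂ (by simp [hq])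
    have hu1 : u ∈ G₁.verts := G₁.endpoints_mem _ he₁ u (by simp)
    have hv1 : v ∈ G₁.verts := G₁.endpoints_mem _ he₁ v (by simp)
    have hw2 : w ∈ G₂.verts := G₂.endpoints_mem _ he₂ w (by simp)
    have hx2 : x ∈ G₂.verts := G₂.endpoints_mem _ he₂ x (by simp)
    have hnu : u ∉ G₂.verts := fun hq => Finset.disjoint_left.1 hdisj hu1 hq
    have hnv : v ∉ G₂.verts := fun hq => Finset.disjoint_left.1 hdisj hv1 hq
    have hfw : f w = u := by simp [hf]
    have hfx : f x = v := by simp [hf, hwx.symm]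
    have hfother : ∀ y, y ≠ w → y ≠ x → f y = y := fun y q1 q2 => by simp [hf, q1, q2]
    have hfmem : ∀ y ∈ G₂.verts, f y ∈ G₁.verts → y = w ∨ y = x := by
      intro y hy hfy
      by_contra hcon
      push_neg at hcon
      rw [hfother y hcon.1 hcon.2] at hfy
      exact Finset.disjoint_left.1 hdisj hfy hy
    have hinj : Set.InjOn f ↑G₂.verts := by
      intro y hy z hz heq
      have hy' : y ∈ G₂.verts := hy
      have hz' : z ∈ G₂.verts := hz
      by_cases q1 : y = w
      · by_cases q3 : z = w
        · rw [q1, q3]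
        · by_cases q4 : z = x
          · rw [q1, hfw, q4, hfx] at heq; exact absurd heq huv
          · rw [q1, hfw, hfother z q3 q4] at heq
            exact absurd (by rw [heq]; exact hz') hnu
      · by_cases q2 : y = x
        · by_cases q3 : z = w
          · rw [q2, hfx, q3, hfw] at heq; exact absurd heq.symm huv
          · by_cases q4 : z = x
            · rw [q2, q4]
            · rw [q2, hfx, hfother z q3 q4] at heq
              exact absurd (by rw [heq]; exact hz') hnv
        · rw [hfother y q1 q2] at heq
          by_cases q3 : z = w
          · rw [q3, hfw] at heq
            exact absurd (by rw [← heq]; exact hy') hnu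
          · by_cases q4 : z = x
            · rw [q4, hfx] at heq
              exact absurd (by rw [← heq]; exact hy') hnv
            · rw [hfother z q3 q4] at heq; exact heq
    have hVint : G₁.verts ∩ G₂.verts.image f = {u, v} := by
      ext z
      simp only [Finset.mem_inter, Finset.mem_image, Finset.mem_insert, Finset.mem_singleton]
      constructor
      · rintro ⟨hz1, y, hy, rfl⟩
        rcases hfmem y hy hz1 with rfl | rfl
        · left; exact hfw
        · right; exact hfx
      · rintro (rfl | rfl)
        · exact ⟨hu1, w, hw2, hfw⟩
        · exact ⟨hv1, x, hx2, hfx⟩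
    have hsuv : s(u, v) = Sym2.map f s(w, x) := by rw [Sym2.map_pair_eq, hfw, hfx]
    have hEint : G₁.edges ∩ G₂.edges.image (Sym2.map f) = {s(u, v)} := by
      ext e
      simp only [Finset.mem_inter, Finset.mem_image, Finset.mem_singleton]
      constructor
      · rintro ⟨hq1, e₂, hq2, rfl⟩
        obtain ⟨a, b, hab, ha, hb, rfl⟩ := G₂.exists_pair hq2
        rw [Sym2.map_pair_eq] at hq1 ⊢
        have hfa : f a ∈ G₁.verts := G₁.endpoints_mem _ hq1 (f a) (by simp)
        have hfb : f b ∈ G₁.verts := G₁.endpoints_mem _ hq1 (f b) (by simp)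
        rcases hfmem a ha hfa with rfl | rfl <;> rcases hfmem b hb hfb with rfl | rfl
        · exact absurd rfl hab
        · rw [hfw, hfx]
        · rw [hfw, hfx]; exact Sym2.eq_swap
        · exact absurd rfl hab
      · rintro rfl
        exact ⟨he₁, s(w, x), he₂, hsuv.symm⟩
    set G₂' : CGraph α := ⟨G₂.verts.image f, G₂.edges.image (Sym2.map f),
      by
        intro e he
        obtain ⟨e₂, hq2, rfl⟩ := Finset.mem_image.1 he
        obtain ⟨a, b, hab, ha, hb, rfl⟩ := G₂.exists_pair hq2
        rw [Sym2.map_pair_eq]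
        intro hdiag
        exact hab (hinj ha hb (Sym2.mk_isDiag_iff.1 hdiag)),
      by
        intro e he z hz
        obtain ⟨e₂, hq2, rfl⟩ := Finset.mem_image.1 he
        obtain ⟨y, hy, rfl⟩ := Sym2.mem_map.1 hz
        exact Finset.mem_image_of_mem f (G₂.endpoints_mem _ hq2 y hy)⟩ with hG₂'
    have hc2v : G₂'.verts.card = G₂.verts.card := Finset.card_image_of_injOn hinj
    have hc2e : G₂'.edges.card = G₂.edges.card :=
      Finset.card_image_of_injOn (CGraph.map_injOn_edges f G₂ hinj)
    have hsp2' : G₂'.Sparse23 := CGraph.map_sparse f G₂ hinj ih₂.2 G₂' rfl rfl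
    have hcard2' : G₂'.edges.card + 3 = 2 * G₂'.verts.card := by
      rw [hc2v, hc2e]; exact ih₂.1
    have hVu : G.verts = (G₁.union G₂').verts := hV
    have hEu : G.edges = (G₁.union G₂').edges := hE
    constructor
    · rw [hVu, hEu]
      exact CGraph.glue_card G₁ G₂' u v huv hVint hEint ih₁.1 hcard2'
    · intro H hsub hc
      refine CGraph.glue_sparse G₁ G₂' u v huv ih₁.2 hsp2' he₁ hVint hEint H ⟨?_, ?_⟩ hc
      · rw [← hVu]; exact hsub.1
      · rw [← hEu]; exact hsub.2
end
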